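/- Let n ≥ 1, suppose X_1, …, X_h ∈ R satisfy f^{(n)}(X_i) = 0 for all i, and let M = (a_{ij}) ∈ M_h(F_q[t]). Then Σ_{i=1}^h μ_n(X_1, …, X_{i−1}, (M⋆X)_i, X_{i+1}, …, X_h) = [tr M]_g(μ_n(X_1, …, X_h)), where tr M = Σ_i a_{ii} ∈ F_q[t]. -/

import Mathlib

open Finset

noncomputable section

/-- The Moore determinant `μ(X₁, …, X_h) = det (Xᵢ^{q^{j-1}})`. -/
def moore (q : ℕ) {h : ℕ} {R : Type*} [CommRing R] (X : Fin h → R) : R :=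
  Matrix.det (Matrix.of fun i j : Fin h => X i ^ q ^ (j : ℕ))

/-- `f(X) = πX + u₁X^q + ⋯ + u_{h−1}X^{q^{h−1}} + X^{q^h}`. -/
def fmap (q h : ℕ) {R : Type*} [CommRing R] (π : R) (u : ℕ → R) (X : R) : R :=
  π * X + (∑ k ∈ Finset.Ico 1 h, u k * X ^ q ^ k) + X ^ q ^ h

/-- `μ_n(X₁, …, X_h) = Σ μ(f^(a₁)(X₁), …, f^(a_h)(X_h))`, the sum over all tuples
`(a₁, …, a_h)` with `0 ≤ aᵢ ≤ n−1` and `a₁ + ⋯ + a_h = (h−1)(n−1)`. -/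
def mooreN (q h n : ℕ) {R : Type*} [CommRing R] (π : R) (u : ℕ → R) (X : Fin h → R) : R :=
  ∑ a ∈ Finset.univ.filter
      (fun a : Fin h → Fin n => ∑ i, (a i : ℕ) = (h - 1) * (n - 1)),
    moore q (fun i => (fmap q h π u)^[(a i : ℕ)] (X i))

/-- `g(T) = πT + (−1)^{h−1}T^q`. -/
def gmap (q h : ℕ) {R : Type*} [CommRing R] (π : R) (T : R) : R :=
  π * T + (-1) ^ (h - 1) * T ^ q

/-- For a polynomial `a = Σ c_m t^m ∈ F_q[t]`, `[a]_f(X) := Σ c_m f^(m)(X)`. -/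
def actF (q h : ℕ) {R : Type*} [CommRing R] (π : R) (u : ℕ → R)
    (K : Type*) [Field K] [Algebra K R] (a : Polynomial K) (X : R) : R :=
  ∑ m ∈ a.support, algebraMap K R (a.coeff m) * (fmap q h π u)^[m] X

/-- For a polynomial `a = Σ c_m t^m ∈ F_q[t]`, `[a]_g(T) := Σ c_m g^(m)(T)`. -/
def actG (q h : ℕ) {R : Type*} [CommRing R] (π : R)
    (K : Type*) [Field K] [Algebra K R] (a : Polynomial K) (T : R) : R :=
  ∑ m ∈ a.support, algebraMap K R (a.coeff m) * (gmap q h π)^[m] T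

/-- For `M = (a_{ij}) ∈ M_h(F_q[t])` and `Z ∈ R^h`, `(M⋆Z)ᵢ := Σ_j [a_{ij}]_f(Z_j)`. -/
def mStar (q h : ℕ) {R : Type*} [CommRing R] (π : R) (u : ℕ → R)
    (K : Type*) [Field K] [Algebra K R]
    (M : Matrix (Fin h) (Fin h) (Polynomial K)) (Z : Fin h → R) (i : Fin h) : R :=
  ∑ j, actF q h π u K (M i j) (Z j)

/-!
Expanding the Moore determinant along its first column gives `μ(Z) = ∑ₖ Zₖ Cₖ(Z)`, with cofactors
`Cₖ` that do not involve `Zₖ`. Replacing that column by `f(Z) = πZ + ∑ₑ uₑ Z^{qᵉ} + Z^{qʰ}`, the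
middle terms repeat other columns and the last one is a cyclic rotation of the columns of
`μ(Z)^q`, so `g(μ(Z)) = ∑ₖ f(Zₖ) Cₖ(Z)`. Summed over the exponent tuples of `μ_n`, applying `g`
thus raises the weight of the tuples by one, one coordinate at a time. When `f^{(n)}` kills every
`Xₖ`, the tuples of the new weight that are not reached have another coordinate `≥ n` by
pigeonhole and contribute nothing, so replacing `Xᵢ` by `f(Xᵢ)` in `μ_n` applies `g`. The trace
formula follows because `μ_n` is `F_q`-linear and alternating in its slots.
-/
open Function Matrix

section

variable {R : Type*} [CommRing R] {q : ℕ}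

section QPower

lemma add_pow_pow (hadd : ∀ x y : R, (x + y) ^ q = x ^ q + y ^ q) (j : ℕ) (x y : R) :
    (x + y) ^ q ^ j = x ^ q ^ j + y ^ q ^ j := by
  induction j with
  | zero => simp
  | succ j ih => rw [pow_succ, pow_mul, pow_mul, pow_mul, ih, hadd]

lemma pow_pow_eq_self {c : R} (hc : c ^ q = c) (j : ℕ) : c ^ q ^ j = c := by
  induction j with
  | zero => simp
  | succ j ih => rw [pow_succ, pow_mul, ih, hc]

end QPower

section Moore

variable {h : ℕ}

def mooreMatrix (q : ℕ) (Z : Fin h → R) : Matrix (Fin h) (Fin h) R :=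
  Matrix.of fun i j => Z i ^ q ^ (j : ℕ)

lemma moore_eq_det_mooreMatrix (Z : Fin h → R) : moore q Z = (mooreMatrix q Z).det := rfl

lemma mooreMatrix_update (Z : Fin h → R) (i : Fin h) (y : R) :
    mooreMatrix q (update Z i y) = (mooreMatrix q Z).updateRow i fun j => y ^ q ^ (j : ℕ) := by
  ext k j
  rcases eq_or_ne k i with rfl | hk
  · simp [mooreMatrix]
  · simp [mooreMatrix, hk]

lemma moore_update_add (hadd : ∀ x y : R, (x + y) ^ q = x ^ q + y ^ q)
    (Z : Fin h → R) (i : Fin h) (y z : R) :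
    moore q (update Z i (y + z)) = moore q (update Z i y) + moore q (update Z i z) := by
  simp only [moore_eq_det_mooreMatrix, mooreMatrix_update, add_pow_pow hadd]
  exact det_updateRow_add _ _ _ _

lemma moore_update_mul {c : R} (hc : c ^ q = c) (Z : Fin h → R) (i : Fin h) (y : R) :
    moore q (update Z i (c * y)) = c * moore q (update Z i y) := by
  simp only [moore_eq_det_mooreMatrix, mooreMatrix_update, mul_pow, pow_pow_eq_self hc]
  exact det_updateRow_smul _ _ c fun j : Fin h => y ^ q ^ (j : ℕ)

lemma moore_eq_zero_of_eq_zero (hq : q ≠ 0) {Z : Fin h → R} {l : Fin h} (hZ : Z l = 0) :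
    moore q Z = 0 :=
  det_eq_zero_of_row_eq_zero l fun j => by simp [hZ, hq]

lemma moore_eq_zero_of_eq {Z : Fin h → R} {i j : Fin h} (hij : i ≠ j) (hZ : Z i = Z j) :
    moore q Z = 0 :=
  det_zero_of_row_eq hij (by ext; simp [hZ])

lemma moore_comp_perm (Z : Fin h → R) (σ : Equiv.Perm (Fin h)) :
    moore q (Z ∘ σ) = ((Equiv.Perm.sign σ : ℤ) : R) * moore q Z :=
  det_permute σ (mooreMatrix q Z)

lemma moore_pow (hadd : ∀ x y : R, (x + y) ^ q = x ^ q + y ^ q) (Z : Fin h → R) :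
    moore q Z ^ q = moore q fun k => Z k ^ q := by
  refine (RingHom.map_det (RingHom.mk' (powMonoidHom q) hadd : R →+* R) _).trans
    (congrArg det ?_)
  ext k j
  change (Z k ^ q ^ (j : ℕ)) ^ q = (Z k ^ q) ^ q ^ (j : ℕ)
  rw [← pow_mul, ← pow_mul, mul_comm]

end Moore

section Cofactor

variable {m : ℕ}

def mooreCof (q : ℕ) (Z : Fin (m + 1) → R) (k : Fin (m + 1)) : R :=
  (mooreMatrix q Z).adjugate 0 k

lemma sum_mul_mooreCof (Z W : Fin (m + 1) → R) :
    ∑ k, W k * mooreCof q Z k = ((mooreMatrix q Z).updateCol 0 W).det := by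
  rw [← cramer_apply, cramer_eq_adjugate_mulVec]
  simp [mulVec, dotProduct, mooreCof, mul_comm]

lemma moore_eq_sum_mul_mooreCof (Z : Fin (m + 1) → R) :
    moore q Z = ∑ k, Z k * mooreCof q Z k := by
  conv_lhs => rw [moore_eq_det_mooreMatrix, ← updateCol_eq_self (mooreMatrix q Z) 0]
  rw [sum_mul_mooreCof]
  simp [mooreMatrix]

lemma sum_pow_mul_mooreCof_eq_zero (Z : Fin (m + 1) → R) {e : ℕ} (he₀ : 1 ≤ e) (he : e ≤ m) :
    ∑ k, Z k ^ q ^ e * mooreCof q Z k = 0 := by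
  rw [sum_mul_mooreCof]
  refine det_zero_of_column_eq (i := 0) (j := ⟨e, by omega⟩) ?_ fun k => ?_
  · simp [Fin.ext_iff]
    omega
  · simp [mooreMatrix, updateCol_apply, Fin.ext_iff]

lemma sum_pow_mul_mooreCof_eq_pow (hadd : ∀ x y : R, (x + y) ^ q = x ^ q + y ^ q)
    (Z : Fin (m + 1) → R) :
    ∑ k, Z k ^ q ^ (m + 1) * mooreCof q Z k = (-1) ^ m * moore q Z ^ q := by
  have hrot : mooreMatrix q (fun k => Z k ^ q)
      = ((mooreMatrix q Z).updateCol 0 fun k => Z k ^ q ^ (m + 1)).submatrix id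
          (finRotate (m + 1)) := by
    ext k j
    rcases eq_or_ne j (Fin.last m) with rfl | hj
    · simp [mooreMatrix, ← pow_mul, ← pow_succ']
    · obtain ⟨j, rfl⟩ := Fin.exists_castSucc_eq.2 hj
      simp [mooreMatrix, finRotate_apply, Fin.succ_ne_zero, ← pow_mul, ← pow_succ']
  rw [sum_mul_mooreCof, moore_pow hadd, moore_eq_det_mooreMatrix, hrot, det_permute',
    sign_finRotate, ← mul_assoc]
  simp [← pow_add, ← two_mul, pow_mul]

lemma gmap_moore (hadd : ∀ x y : R, (x + y) ^ q = x ^ q + y ^ q) (π : R) (u : ℕ → R)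
    (Z : Fin (m + 1) → R) :
    gmap q (m + 1) π (moore q Z) = ∑ k, fmap q (m + 1) π u (Z k) * mooreCof q Z k := by
  simp only [fmap, add_mul, sum_add_distrib, sum_mul, mul_assoc, ← mul_sum]
  rw [sum_comm, sum_pow_mul_mooreCof_eq_pow hadd, ← moore_eq_sum_mul_mooreCof,
    sum_eq_zero fun e he => ?_]
  · simp [gmap]
  · rw [mem_Ico] at he
    rw [← mul_sum, sum_pow_mul_mooreCof_eq_zero Z he.1 (by omega), mul_zero]

lemma mooreCof_congr {Z Z' : Fin (m + 1) → R} {k : Fin (m + 1)} (hZ : ∀ l ≠ k, Z l = Z' l) :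
    mooreCof q Z k = mooreCof q Z' k := by
  simp only [mooreCof, adjugate_apply]
  congr 1
  ext l j
  rcases eq_or_ne l k with rfl | hl
  · simp
  · simp [hl, mooreMatrix, hZ l hl]

lemma mooreCof_eq_zero (hq : q ≠ 0) {Z : Fin (m + 1) → R} {k l : Fin (m + 1)} (hlk : l ≠ k)
    (hZ : Z l = 0) : mooreCof q Z k = 0 := by
  rw [mooreCof, adjugate_apply]
  exact det_eq_zero_of_row_eq_zero l fun j => by simp [hlk, mooreMatrix, hZ, hq]

end Cofactor

section Maps

variable {h : ℕ} {π : R} {u : ℕ → R}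

lemma fmap_add (hadd : ∀ x y : R, (x + y) ^ q = x ^ q + y ^ q) (x y : R) :
    fmap q h π u (x + y) = fmap q h π u x + fmap q h π u y := by
  simp only [fmap, add_pow_pow hadd, mul_add, sum_add_distrib]
  ring

lemma fmap_mul {c : R} (hc : c ^ q = c) (x : R) : fmap q h π u (c * x) = c * fmap q h π u x := by
  simp only [fmap, mul_pow, pow_pow_eq_self hc, mul_add, mul_sum]
  ring_nf

lemma fmap_zero (hq : q ≠ 0) : fmap q h π u 0 = 0 := by
  simp [fmap, hq]

lemma fmap_iterate_add (hadd : ∀ x y : R, (x + y) ^ q = x ^ q + y ^ q) (m : ℕ) (x y : R) :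
    (fmap q h π u)^[m] (x + y) = (fmap q h π u)^[m] x + (fmap q h π u)^[m] y :=
  iterate_map_add (AddMonoidHom.mk' _ (fmap_add hadd)) m x y

lemma fmap_iterate_mul {c : R} (hc : c ^ q = c) (m : ℕ) (x : R) :
    (fmap q h π u)^[m] (c * x) = c * (fmap q h π u)^[m] x := by
  have hcomm : Function.Commute (c * ·) (fmap q h π u) := fun x => (fmap_mul hc x).symm
  exact (hcomm.iterate_right m x).symm

lemma fmap_iterate_eq_zero_of_le (hq : q ≠ 0) {n m : ℕ} {x : R} (hx : (fmap q h π u)^[n] x = 0)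
    (hnm : n ≤ m) : (fmap q h π u)^[m] x = 0 := by
  obtain ⟨d, rfl⟩ := Nat.exists_eq_add_of_le hnm
  rw [add_comm, iterate_add_apply, hx, iterate_fixed (fmap_zero hq)]

lemma gmap_add (hadd : ∀ x y : R, (x + y) ^ q = x ^ q + y ^ q) (x y : R) :
    gmap q h π (x + y) = gmap q h π x + gmap q h π y := by
  simp only [gmap, hadd]
  ring

lemma gmap_sum (hadd : ∀ x y : R, (x + y) ^ q = x ^ q + y ^ q) {ι : Type*} (s : Finset ι)
    (v : ι → R) : gmap q h π (∑ i ∈ s, v i) = ∑ i ∈ s, gmap q h π (v i) :=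
  map_sum (AddMonoidHom.mk' _ (gmap_add hadd)) v s

end Maps

section AntidiagonalTuple

open Finset.Nat

lemma exists_ne_le_of_sum_eq_succ {h n c : ℕ} {b : Fin h → ℕ} {k : Fin h}
    (hb : ∑ l, b l = c + 1) (hbk : b k = 0) (hc : (h - 1) * (n - 1) ≤ c) :
    ∃ l ≠ k, n ≤ b l := by
  by_contra! hlt
  have : ∑ l, b l ≤ (h - 1) * (n - 1) := calc
    ∑ l, b l = ∑ l ∈ univ.erase k, b l := (sum_erase _ hbk).symm
    _ ≤ (univ.erase k).card • (n - 1) :=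
      sum_le_card_nsmul _ _ _ fun l hl => Nat.le_sub_one_of_lt (hlt l (ne_of_mem_erase hl))
    _ = (h - 1) * (n - 1) := by simp [card_erase_of_mem]
  omega

lemma sum_antidiagonalTuple_add_single {M : Type*} [AddCommMonoid M] {h n c : ℕ}
    (G : (Fin h → ℕ) → M) (k : Fin h) (hc : (h - 1) * (n - 1) ≤ c)
    (hG : ∀ b, ∀ l ≠ k, n ≤ b l → G b = 0) :
    ∑ a ∈ antidiagonalTuple h c, G (a + Pi.single k 1)
      = ∑ b ∈ antidiagonalTuple h (c + 1), G b := by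
  have hzero : ∑ b ∈ (antidiagonalTuple h (c + 1)).filter (· k = 0), G b = 0 := by
    refine sum_eq_zero fun b hb => ?_
    simp only [mem_filter, mem_antidiagonalTuple] at hb
    obtain ⟨l, hlk, hl⟩ := exists_ne_le_of_sum_eq_succ hb.1 hb.2 hc
    exact hG b l hlk hl
  rw [← sum_filter_add_sum_filter_not (antidiagonalTuple h (c + 1)) (· k = 0), hzero, zero_add]
  have hsub : ∀ b : Fin h → ℕ, b k ≠ 0 → b - Pi.single k 1 + Pi.single k 1 = b := by
    intro b hbk
    ext l
    rcases eq_or_ne l k with rfl | hl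
    · simp
      omega
    · simp [hl]
  refine sum_nbij' (· + Pi.single k 1) (· - Pi.single k 1) (fun a ha => ?_) (fun b hb => ?_)
    (fun a _ => add_tsub_cancel_right a _) (fun b hb => hsub b (mem_filter.1 hb).2) fun _ _ => rfl
  · rw [mem_antidiagonalTuple] at ha
    simp [mem_filter, mem_antidiagonalTuple, sum_add_distrib, ha]
  · simp only [mem_filter, mem_antidiagonalTuple] at hb ⊢
    have := congrArg (fun x => ∑ l, x l) (hsub b hb.2)
    simp only [Pi.add_apply, sum_add_distrib, sum_pi_single', mem_univ, if_true] at this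
    omega

end AntidiagonalTuple

section MooreN

open Finset.Nat

variable {h n : ℕ} {π : R} {u : ℕ → R}

def mooreIterate (q h : ℕ) (π : R) (u : ℕ → R) (Y : Fin h → R) (b : Fin h → ℕ) : R :=
  moore q fun k => (fmap q h π u)^[b k] (Y k)

lemma mooreIterate_eq_zero (hq : q ≠ 0) {Y : Fin h → R}
    (hY : ∀ k, (fmap q h π u)^[n] (Y k) = 0) {b : Fin h → ℕ} {l : Fin h} (hl : n ≤ b l) :
    mooreIterate q h π u Y b = 0 :=
  moore_eq_zero_of_eq_zero hq (fmap_iterate_eq_zero_of_le hq (hY l) hl)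

lemma mooreN_eq_sum_antidiagonalTuple (hq : q ≠ 0) {Y : Fin h → R}
    (hY : ∀ k, (fmap q h π u)^[n] (Y k) = 0) :
    mooreN q h n π u Y
      = ∑ b ∈ antidiagonalTuple h ((h - 1) * (n - 1)), mooreIterate q h π u Y b := by
  have hinj : Injective fun (a : Fin h → Fin n) k => (a k : ℕ) :=
    fun a a' haa' => funext fun k => Fin.ext (congrFun haa' k)
  change ∑ a ∈ _, mooreIterate q h π u Y (fun k => ((a : Fin h → Fin n) k : ℕ)) = _
  rw [← sum_image hinj.injOn]
  refine sum_subset (fun b hb => ?_) fun b hb hb' => ?_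
  · obtain ⟨a, ha, rfl⟩ := mem_image.1 hb
    simpa [mem_antidiagonalTuple] using ha
  · obtain ⟨l, hl⟩ : ∃ l, n ≤ b l := by
      by_contra! hlt
      refine hb' (mem_image.2 ⟨fun k => ⟨b k, hlt k⟩, ?_, rfl⟩)
      simpa [mem_antidiagonalTuple] using hb
    exact mooreIterate_eq_zero hq hY hl

lemma gmap_sum_mooreIterate (hq : q ≠ 0) (hadd : ∀ x y : R, (x + y) ^ q = x ^ q + y ^ q)
    {m c : ℕ} {Y : Fin (m + 1) → R} (hY : ∀ k, (fmap q (m + 1) π u)^[n] (Y k) = 0)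
    (hc : m * (n - 1) ≤ c) :
    gmap q (m + 1) π (∑ a ∈ antidiagonalTuple (m + 1) c, mooreIterate q (m + 1) π u Y a)
      = ∑ b ∈ antidiagonalTuple (m + 1) (c + 1), mooreIterate q (m + 1) π u Y b := by
  set f := fmap q (m + 1) π u
  set T : Fin (m + 1) → (Fin (m + 1) → ℕ) → R :=
    fun k b => f^[b k] (Y k) * mooreCof q (fun l => f^[b l] (Y l)) k
  have hshift : ∀ (a : Fin (m + 1) → ℕ) k, f (f^[a k] (Y k)) * mooreCof q (fun l => f^[a l] (Y l)) k
      = T k (a + Pi.single k 1) := by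
    intro a k
    simp only [T, Pi.add_apply, Pi.single_eq_same, iterate_succ_apply']
    congr 1
    exact mooreCof_congr fun l hl => by simp [hl]
  have hvanish : ∀ k b, ∀ l ≠ k, n ≤ b l → T k b = 0 := fun k b l hl hbl => by
    simp only [T]
    rw [mooreCof_eq_zero (Z := fun l => f^[b l] (Y l)) hq hl
      (fmap_iterate_eq_zero_of_le hq (hY l) hbl), mul_zero]
  calc _ = ∑ a ∈ antidiagonalTuple (m + 1) c, ∑ k, T k (a + Pi.single k 1) := by
        rw [gmap_sum hadd]
        refine sum_congr rfl fun a _ => ?_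
        rw [mooreIterate, gmap_moore hadd π u]
        exact sum_congr rfl fun k _ => hshift a k
    _ = ∑ k, ∑ b ∈ antidiagonalTuple (m + 1) (c + 1), T k b := by
        rw [sum_comm]
        exact sum_congr rfl fun k _ =>
          sum_antidiagonalTuple_add_single _ k (by simpa using hc) (hvanish k)
    _ = _ := by
        rw [sum_comm]
        exact sum_congr rfl fun b _ => (moore_eq_sum_mul_mooreCof _).symm

lemma mooreN_update_fmap (hq : q ≠ 0) (hadd : ∀ x y : R, (x + y) ^ q = x ^ q + y ^ q)
    {Y : Fin h → R} (hY : ∀ k, (fmap q h π u)^[n] (Y k) = 0) (i : Fin h) :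
    mooreN q h n π u (update Y i (fmap q h π u (Y i))) = gmap q h π (mooreN q h n π u Y) := by
  obtain ⟨m, rfl⟩ : ∃ m, h = m + 1 := ⟨h - 1, by have := i.pos; omega⟩
  have hY' : ∀ k, (fmap q (m + 1) π u)^[n] (update Y i (fmap q (m + 1) π u (Y i)) k) = 0 := by
    intro k
    rcases eq_or_ne k i with rfl | hk
    · rw [update_self, ← iterate_succ_apply, iterate_succ_apply', hY, fmap_zero hq]
    · rw [update_of_ne hk, hY]
  rw [mooreN_eq_sum_antidiagonalTuple hq hY', mooreN_eq_sum_antidiagonalTuple hq hY,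
    gmap_sum_mooreIterate hq hadd hY (by simp),
    ← sum_antidiagonalTuple_add_single _ i le_rfl fun b l _ hl => mooreIterate_eq_zero hq hY hl]
  refine sum_congr rfl fun a _ => congrArg (moore q) (funext fun k => ?_)
  rcases eq_or_ne k i with rfl | hk
  · simp [iterate_succ_apply]
  · simp [hk]

lemma mooreN_update_fmap_iterate (hq : q ≠ 0) (hadd : ∀ x y : R, (x + y) ^ q = x ^ q + y ^ q)
    {Y : Fin h → R} (hY : ∀ k, (fmap q h π u)^[n] (Y k) = 0) {y : R}
    (hy : (fmap q h π u)^[n] y = 0) (i : Fin h) (m : ℕ) :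
    mooreN q h n π u (update Y i ((fmap q h π u)^[m] y))
      = (gmap q h π)^[m] (mooreN q h n π u (update Y i y)) := by
  induction m with
  | zero => rfl
  | succ m ih =>
    have hYm : ∀ k, (fmap q h π u)^[n] (update Y i ((fmap q h π u)^[m] y) k) = 0 := by
      intro k
      rcases eq_or_ne k i with rfl | hk
      · rw [update_self, ← iterate_add_apply, add_comm, iterate_add_apply, hy,
          iterate_fixed (fmap_zero hq)]
      · rw [update_of_ne hk, hY]
    have := mooreN_update_fmap hq hadd hYm i
    rw [update_idem, update_self, ← iterate_succ_apply' (fmap q h π u)] at this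
    rw [this, ih, iterate_succ_apply']

end MooreN

section Linearity

variable {h n : ℕ} {π : R} {u : ℕ → R}

lemma iterate_update {ι α : Type*} [DecidableEq ι] {F : α → α} (b : ι → ℕ) (Y : ι → α) (i : ι)
    (y : α) :
    (fun k => F^[b k] (update Y i y k)) = update (fun k => F^[b k] (Y k)) i (F^[b i] y) :=
  funext <| apply_update (fun k => F^[b k]) Y i y

lemma mooreN_update_add (hadd : ∀ x y : R, (x + y) ^ q = x ^ q + y ^ q) (Y : Fin h → R)
    (i : Fin h) (y z : R) :
    mooreN q h n π u (update Y i (y + z))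
      = mooreN q h n π u (update Y i y) + mooreN q h n π u (update Y i z) := by
  simp only [mooreN, ← sum_add_distrib]
  refine sum_congr rfl fun a _ => ?_
  simp only [iterate_update (fun k => (a k : ℕ)), fmap_iterate_add hadd, moore_update_add hadd]

lemma mooreN_update_mul {c : R} (hc : c ^ q = c) (Y : Fin h → R) (i : Fin h) (y : R) :
    mooreN q h n π u (update Y i (c * y)) = c * mooreN q h n π u (update Y i y) := by
  simp only [mooreN, mul_sum]
  refine sum_congr rfl fun a _ => ?_
  simp only [iterate_update (fun k => (a k : ℕ)), fmap_iterate_mul hc, moore_update_mul hc]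

lemma mooreN_update_sum (hadd : ∀ x y : R, (x + y) ^ q = x ^ q + y ^ q) (Y : Fin h → R)
    (i : Fin h) {ι : Type*} (s : Finset ι) (v : ι → R) :
    mooreN q h n π u (update Y i (∑ j ∈ s, v j)) = ∑ j ∈ s, mooreN q h n π u (update Y i (v j)) :=
  map_sum (AddMonoidHom.mk' (fun y => mooreN q h n π u (update Y i y))
    (mooreN_update_add hadd Y i)) v s

/-- Pairing `a` with `a ∘ swap i j` matches determinants with two rows swapped, and tuples fixed by
the swap give two equal rows (pairing, rather than `S = -S`, also works in characteristic `2`). -/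
lemma mooreN_update_eq_zero_of_ne (Y : Fin h → R) {i j : Fin h} (hij : i ≠ j) :
    mooreN q h n π u (update Y i (Y j)) = 0 := by
  set Z := update Y i (Y j)
  have hZ : ∀ k, Z (Equiv.swap i j k) = Z k := by
    intro k
    rcases eq_or_ne k i with rfl | hki
    · simp [Z, hij.symm]
    rcases eq_or_ne k j with rfl | hkj
    · simp [Z, hij.symm]
    · rw [Equiv.swap_apply_of_ne_of_ne hki hkj]
  refine sum_involution (fun a _ => a ∘ Equiv.swap i j) (fun a _ => ?_)
    (fun a _ hne hfix => hne ?_) (fun a ha => ?_) fun a _ => ?_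
  · have : (fun k => (fmap q h π u)^[((a ∘ Equiv.swap i j) k : ℕ)] (Z k))
        = (fun k => (fmap q h π u)^[(a k : ℕ)] (Z k)) ∘ Equiv.swap i j :=
      funext fun k => by simp [hZ]
    rw [this, moore_comp_perm, Equiv.Perm.sign_swap hij]
    simp
  · have haij : a i = a j := by simpa using (congrFun hfix i).symm
    exact moore_eq_zero_of_eq hij (by simp [haij, ← hZ i])
  · simp only [mem_filter, mem_univ, true_and] at ha ⊢
    rw [← ha]
    exact Equiv.sum_comp (Equiv.swap i j) fun k => (a k : ℕ)
  · ext k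
    simp

end Linearity

section PolynomialAction

variable {h n : ℕ} {π : R} {u : ℕ → R} {K : Type*} [Field K] [Algebra K R]

lemma actG_sum {ι : Type*} (s : Finset ι) (a : ι → Polynomial K) (T : R) :
    actG q h π K (∑ i ∈ s, a i) T = ∑ i ∈ s, actG q h π K (a i) T := by
  have hlsum : ∀ b : Polynomial K, actG q h π K b T
      = Polynomial.lsum (fun m => LinearMap.toSpanSingleton K R ((gmap q h π)^[m] T)) b :=
    fun b => by simp [actG, Polynomial.sum_def, Algebra.smul_def]
  simp only [hlsum, map_sum]

lemma actG_zero_right (hq : q ≠ 0) (a : Polynomial K) : actG q h π K a 0 = 0 := by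
  simp [actG, iterate_fixed (show gmap q h π 0 = 0 by simp [gmap, hq])]

lemma mooreN_update_actF (hq : q ≠ 0) (hadd : ∀ x y : R, (x + y) ^ q = x ^ q + y ^ q)
    (hK : ∀ c : K, c ^ q = c) {Y : Fin h → R} (hY : ∀ k, (fmap q h π u)^[n] (Y k) = 0) {y : R}
    (hy : (fmap q h π u)^[n] y = 0) (i : Fin h) (a : Polynomial K) :
    mooreN q h n π u (update Y i (actF q h π u K a y))
      = actG q h π K a (mooreN q h n π u (update Y i y)) := by
  have hfix : ∀ c : K, algebraMap K R c ^ q = algebraMap K R c := fun c => by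
    rw [← map_pow, hK]
  simp only [actF, actG, mooreN_update_sum hadd, mooreN_update_mul (hfix _),
    mooreN_update_fmap_iterate hq hadd hY hy]

end PolynomialAction

end

theorem sum_mooreN_mStar_eq_trace_action_general
    (p e q h n : ℕ) (hp : p.Prime) (hq : q = p ^ e)
    (K : Type*) [Field K] [Fintype K] (hK : Fintype.card K = q)
    (R : Type*) [CommRing R] [Algebra K R]
    (π : R) (u : ℕ → R) (X : Fin h → R)
    (hX : ∀ i, (fmap q h π u)^[n] (X i) = 0)
    (M : Matrix (Fin h) (Fin h) (Polynomial K)) :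
    ∑ i, mooreN q h n π u (Function.update X i (mStar q h π u K M X i))
      = actG q h π K (∑ i, M i i) (mooreN q h n π u X) := by
  obtain hR | hR := subsingleton_or_nontrivial R
  · exact Subsingleton.elim _ _
  have : Fact p.Prime := ⟨hp⟩
  have : CharP K p := charP_of_card_eq_prime_pow (hK.trans hq)
  have : CharP R p := charP_of_injective_algebraMap (algebraMap K R).injective p
  have hq0 : q ≠ 0 := hq ▸ pow_ne_zero e hp.ne_zero
  have hadd : ∀ x y : R, (x + y) ^ q = x ^ q + y ^ q := hq ▸ fun x y => add_pow_char_pow x y p e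
  have hKq : ∀ c : K, c ^ q = c := hK ▸ FiniteField.pow_card
  calc _ = ∑ i, ∑ j, actG q h π K (M i j) (mooreN q h n π u (update X i (X j))) := by
        refine sum_congr rfl fun i _ => ?_
        rw [mStar, mooreN_update_sum hadd]
        exact sum_congr rfl fun j _ => mooreN_update_actF hq0 hadd hKq hX (hX j) i (M i j)
    _ = ∑ i, actG q h π K (M i i) (mooreN q h n π u X) := by
        refine sum_congr rfl fun i _ => ?_
        rw [sum_eq_single i (fun j _ hji => ?_) (by simp), update_eq_self]
        rw [mooreN_update_eq_zero_of_ne X hji.symm, actG_zero_right hq0]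
    _ = _ := (actG_sum _ _ _).symm

/-- `Σ_{i=1}^h μ_n(X₁, …, X_{i−1}, (M⋆X)ᵢ, X_{i+1}, …, X_h) = [tr M]_g(μ_n(X₁, …, X_h))`. -/
theorem sum_mooreN_mStar_eq_trace_action
    (p e q h n : ℕ) (hp : p.Prime) (he : 1 ≤ e) (hq : q = p ^ e) (hh : 1 ≤ h) (hn : 1 ≤ n)
    (K : Type*) [Field K] [Fintype K] [DecidableEq K] (hK : Fintype.card K = q)
    (R : Type*) [CommRing R] [Algebra K R]
    (π : R) (u : ℕ → R) (X : Fin h → R)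
    (hX : ∀ i, (fmap q h π u)^[n] (X i) = 0)
    (M : Matrix (Fin h) (Fin h) (Polynomial K)) :
    ∑ i, mooreN q h n π u (Function.update X i (mStar q h π u K M X i))
      = actG q h π K (∑ i, M i i) (mooreN q h n π u X) :=
  sum_mooreN_mStar_eq_trace_action_general p e q h n hp hq K hK R π u X hX M
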